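/- arXiv:1903.00835 — 7 statements merged into one kernel-verified Lean document; each statement's English description precedes it below -/
import Mathlib

section
/- For every x ∈ ℂ with x ≠ 1 and every function h : ℕ → ℂ such that ∑_{n≥0} |x^n h(n)| < ∞, and every K ∈ ℕ, one has ∑_{n≥0} x^n h(n) = ∑_{r=0}^{K-1} x^r (Δ^r h)(0) / (1-x)^{r+1} + (x^K/(1-x)^K) ∑_{n≥0} x^n (Δ^K h)(n), where Δ is the forward difference operator Δh(n) = h(n+1) - h(n) and Δ^r is its r-th iterate. -/
open scoped BigOperators

/-- Forward difference operator on sequences. -/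
noncomputable def fdiff (h : ℕ → ℂ) : ℕ → ℂ := fun n => h (n + 1) - h n

/-!
Summation by parts: multiplying `S = ∑ xⁿ h n` by `1 - x` and shifting the index gives
`(1 - x) S = h 0 + x ∑ xⁿ (Δh)(n)`. Summability of `xⁿ h n` passes to `xⁿ (Δh)(n)`, so this step can be
iterated `K` times, and the finite sum collects the boundary terms `h 0, (Δh)(0), …`.
-/

theorem Summable.pow_mul_shift {α : Type*} [DivisionRing α] [TopologicalSpace α]
    [IsTopologicalRing α] {x : α} {f : ℕ → α} (hf : Summable fun n => x ^ n * f n) :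
    Summable fun n => x ^ n * f (n + 1) := by
  rcases eq_or_ne x 0 with rfl | hx
  · refine summable_of_ne_finset_zero (s := {0}) fun n hn => ?_
    rw [zero_pow (Finset.notMem_singleton.mp hn), zero_mul]
  · have hsucc := ((summable_nat_add_iff 1).mpr hf).mul_left x⁻¹
    refine hsucc.congr fun n => ?_
    rw [pow_succ', mul_assoc, inv_mul_cancel_left₀ hx]

theorem Summable.pow_mul_fdiff {x : ℂ} {h : ℕ → ℂ} (hs : Summable fun n => x ^ n * h n) :
    Summable fun n => x ^ n * fdiff h n := by
  simpa only [fdiff, mul_sub] using hs.pow_mul_shift.sub hs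

theorem Summable.pow_mul_fdiff_iterate {x : ℂ} {h : ℕ → ℂ} (hs : Summable fun n => x ^ n * h n)
    (K : ℕ) : Summable fun n => x ^ n * (fdiff^[K] h) n := by
  induction K with
  | zero => exact hs
  | succ K ih => simpa only [Function.iterate_succ_apply'] using ih.pow_mul_fdiff

theorem one_sub_mul_tsum_pow_mul {x : ℂ} {h : ℕ → ℂ} (hs : Summable fun n => x ^ n * h n) :
    (1 - x) * ∑' n, x ^ n * h n = h 0 + x * ∑' n, x ^ n * fdiff h n := by
  have hsucc : Summable fun n => x ^ (n + 1) * h (n + 1) := (summable_nat_add_iff 1).mpr hs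
  have hdiff : x * ∑' n, x ^ n * fdiff h n =
      ∑' n, x ^ (n + 1) * h (n + 1) - x * ∑' n, x ^ n * h n := by
    rw [← tsum_mul_left, ← tsum_mul_left, ← hsucc.tsum_sub (hs.mul_left x)]
    congr 1 with n
    simp only [fdiff]
    ring
  rw [hdiff, hs.tsum_eq_zero_add]
  simp only [pow_zero, one_mul]
  ring

/-- Euler transform: for `x ≠ 1` and `h` with `∑ |xⁿ h n| < ∞`,
`∑ xⁿ h n = ∑_{r<K} xʳ (Δʳh)(0)/(1-x)^{r+1} + x^K/(1-x)^K ∑ xⁿ (Δᴷh)(n)`. -/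
theorem euler_transform (x : ℂ) (hx : x ≠ 1) (h : ℕ → ℂ)
    (hs : Summable fun n : ℕ => ‖x ^ n * h n‖) (K : ℕ) :
    ∑' n : ℕ, x ^ n * h n =
      (∑ r ∈ Finset.range K, x ^ r * (fdiff^[r] h) 0 / (1 - x) ^ (r + 1)) +
        x ^ K / (1 - x) ^ K * ∑' n : ℕ, x ^ n * (fdiff^[K] h) n := by
  have h1x : (1 : ℂ) - x ≠ 0 := sub_ne_zero.mpr hx.symm
  induction K with
  | zero => simp
  | succ K ih =>
    have step : ∑' n, x ^ n * (fdiff^[K] h) n =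
        ((fdiff^[K] h) 0 + x * ∑' n, x ^ n * fdiff (fdiff^[K] h) n) / (1 - x) := by
      rw [eq_div_iff h1x, mul_comm]
      exact one_sub_mul_tsum_pow_mul (hs.of_norm.pow_mul_fdiff_iterate K)
    rw [ih, step, Finset.sum_range_succ, Function.iterate_succ_apply']
    field_simp
    ring
end

section
/- Let ℓ be a nonnegative integer, N a positive integer, and α, z complex numbers with Re(z) > 0 and Re(α) > 0. Then ∑_{n≥1} (-1)^{n-1} n^ℓ e^{-n²z - nα} = (-1)^ℓ ∑_{k=0}^{N-1} ((-z)^k / k!) · d^{2k+ℓ}/dα^{2k+ℓ} [1/(1+e^α)] + z^N R_N(ℓ, α, z), where R_N(ℓ, α, z) = ((-1)^{N+ℓ}/(N-1)!) ∫_0^1 (1-t)^{N-1} d^{2N+ℓ}/dα^{2N+ℓ} [∑_{n≥1} (-1)^{n-1} e^{-n²zt - nα}] dt. -/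
/-!
Expand `e^{-n²z}` by Taylor's formula with integral remainder for `t ↦ e^{-n²zt}` on `[0, 1]`.
Because `(-n)^{2k+ℓ} e^{-nα}` is the `(2k+ℓ)`-th `α`-derivative of `e^{-nα}`, summing over `n`
turns the Taylor coefficients into derivatives of `∑ (-1)^{n-1} e^{-nα} = 1/(1+e^α)`, and the
remainders into the integral of derivatives of the series at `zt`. Interchanging `∑ₙ` with `∂_α`
and with `∫ dt` is justified by the uniform bound `n^m e^{-n Re α}`, valid as `Re z ≥ 0`.
-/

open Complex Set
open scoped Interval

lemma hasDerivAt_cexp_mul_ofReal (w : ℂ) (t : ℝ) :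
    HasDerivAt (fun t : ℝ => cexp (w * t)) (w * cexp (w * t)) t := by
  simpa [mul_comm] using ((hasDerivAt_id (t : ℂ)).const_mul w).cexp.comp_ofReal

lemma iteratedDeriv_cexp_mul_ofReal (w : ℂ) (k : ℕ) :
    iteratedDeriv k (fun t : ℝ => cexp (w * t)) = fun t : ℝ => w ^ k * cexp (w * t) := by
  induction k with
  | zero => simp
  | succ k ih =>
    rw [iteratedDeriv_succ, ih]
    ext t
    rw [((hasDerivAt_cexp_mul_ofReal w t).const_mul (w ^ k)).deriv, pow_succ, mul_assoc]

lemma cexp_eq_sum_add_integral (w : ℂ) (M : ℕ) :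
    cexp w = ∑ k ∈ Finset.range (M + 1), w ^ k / k.factorial
      + w ^ (M + 1) / M.factorial * ∫ t in (0 : ℝ)..1, ((1 - t : ℝ) : ℂ) ^ M * cexp (w * t) := by
  have hf : ContDiff ℝ ⊤ (fun t : ℝ => cexp (w * t)) :=
    (contDiff_const.mul ofRealCLM.contDiff).cexp
  have hderiv : ∀ k, ∀ t ∈ [[(0 : ℝ), 1]],
      iteratedDerivWithin k (fun t : ℝ => cexp (w * t)) [[0, 1]] t = w ^ k * cexp (w * t) :=
    fun k t ht => by
      rw [iteratedDerivWithin_eq_iteratedDeriv (uniqueDiffOn_uIcc zero_ne_one)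
        (hf.contDiffAt.of_le le_top) ht, iteratedDeriv_cexp_mul_ofReal]
  have h := taylor_integral_remainder (x₀ := 0) (x := 1) (n := M) (hf.of_le le_top).contDiffOn
  have hcoeff : ∀ k ∈ Finset.range (M + 1), ((k.factorial : ℝ)⁻¹ * (1 - 0) ^ k) •
      iteratedDerivWithin k (fun t : ℝ => cexp (w * t)) [[0, 1]] 0 = w ^ k / k.factorial :=
    fun k _ => by
      rw [hderiv k 0 left_mem_uIcc, real_smul]
      push_cast
      simp [div_eq_inv_mul]
  rw [taylor_within_apply, Finset.sum_congr rfl hcoeff, ofReal_one, mul_one,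
    intervalIntegral.integral_congr (fun t ht => by rw [hderiv _ _ ht])] at h
  rw [← sub_eq_iff_eq_add', h, ← intervalIntegral.integral_const_mul]
  refine intervalIntegral.integral_congr fun t _ => ?_
  simp only [real_smul]
  push_cast
  ring

lemma mul_pow_mul_cexp_eq_taylor (a b z α : ℂ) (ℓ M : ℕ) :
    b * a ^ ℓ * cexp (-a ^ 2 * z - a * α)
      = (-1) ^ ℓ * ∑ k ∈ Finset.range (M + 1),
          (-z) ^ k / k.factorial * (b * (-a) ^ (2 * k + ℓ) * cexp (-a * α))
        + z ^ (M + 1) * ((-1) ^ (M + 1 + ℓ) / M.factorial *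
          ∫ t in (0 : ℝ)..1, ((1 - t : ℝ) : ℂ) ^ M *
            (b * cexp (-a ^ 2 * z * t) * (-a) ^ (2 * (M + 1) + ℓ) * cexp (-a * α))) := by
  -- `ring` cannot cancel `(-1) ^ ℓ * (-1) ^ ℓ`, so it is fed to `linear_combination` below.
  have hsign : (-1 : ℂ) ^ ℓ * (-1) ^ ℓ = 1 := by rw [← mul_pow]; norm_num
  have hpow : ∀ k, (-a) ^ (2 * k + ℓ) = (-1) ^ ℓ * (a ^ 2) ^ k * a ^ ℓ := fun k => by
    rw [pow_add, pow_mul, neg_sq, neg_pow]; ring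
  have hsplit : cexp (-a ^ 2 * z - a * α) = cexp (-a ^ 2 * z) * cexp (-a * α) := by
    rw [← Complex.exp_add]; ring_nf
  have hint : ∫ t in (0 : ℝ)..1, ((1 - t : ℝ) : ℂ) ^ M *
        (b * cexp (-a ^ 2 * z * t) * (-a) ^ (2 * (M + 1) + ℓ) * cexp (-a * α))
      = b * (-a) ^ (2 * (M + 1) + ℓ) * cexp (-a * α) *
          ∫ t in (0 : ℝ)..1, ((1 - t : ℝ) : ℂ) ^ M * cexp (-a ^ 2 * z * t) := by
    rw [← intervalIntegral.integral_const_mul]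
    exact intervalIntegral.integral_congr fun t _ => by ring
  have hsum : b * a ^ ℓ * (∑ k ∈ Finset.range (M + 1), (-a ^ 2 * z) ^ k / k.factorial)
        * cexp (-a * α)
      = (-1) ^ ℓ * ∑ k ∈ Finset.range (M + 1),
          (-z) ^ k / k.factorial * (b * (-a) ^ (2 * k + ℓ) * cexp (-a * α)) := by
    rw [Finset.mul_sum, Finset.mul_sum, Finset.sum_mul]
    refine Finset.sum_congr rfl fun k _ => ?_
    rw [hpow]
    linear_combination
      (-(b * a ^ ℓ * (a ^ 2) ^ k * (-z) ^ k / k.factorial * cexp (-a * α))) * hsign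
  rw [hint, hsplit, cexp_eq_sum_add_integral (-a ^ 2 * z) M, ← hsum, hpow]
  linear_combination (-(b * a ^ ℓ * (a ^ 2) ^ (M + 1) * z ^ (M + 1) * (-1) ^ (M + 1)
    / M.factorial * cexp (-a * α) *
    ∫ t in (0 : ℝ)..1, ((1 - t : ℝ) : ℂ) ^ M * cexp (-a ^ 2 * z * t))) * hsign

section ExpSeries

lemma summable_pow_mul_exp_neg_succ_mul (m : ℕ) {ε : ℝ} (hε : 0 < ε) :
    Summable fun n : ℕ => ((n : ℝ) + 1) ^ m * Real.exp (-((n : ℝ) + 1) * ε) := by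
  refine ((summable_nat_add_iff 1).mpr (Real.summable_pow_mul_exp_neg_nat_mul m hε)).congr
    fun n => ?_
  push_cast
  ring_nf

lemma norm_natCast_add_one (n : ℕ) : ‖(n : ℂ) + 1‖ = (n : ℝ) + 1 := by
  exact_mod_cast norm_natCast (n + 1)

noncomputable def expSeriesDeriv (c : ℕ → ℂ) (m : ℕ) (β : ℂ) : ℂ :=
  ∑' n : ℕ, c n * (-((n : ℂ) + 1)) ^ m * cexp (-((n : ℂ) + 1) * β)

variable {c : ℕ → ℂ} {C : ℝ}

lemma norm_expSeriesDeriv_term_le (hc : ∀ n, ‖c n‖ ≤ C) (m n : ℕ) {β : ℂ} {ε : ℝ}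
    (hβ : ε ≤ β.re) :
    ‖c n * (-((n : ℂ) + 1)) ^ m * cexp (-((n : ℂ) + 1) * β)‖
      ≤ C * (((n : ℝ) + 1) ^ m * Real.exp (-((n : ℝ) + 1) * ε)) := by
  have hexp : ‖cexp (-((n : ℂ) + 1) * β)‖ ≤ Real.exp (-((n : ℝ) + 1) * ε) := by
    rw [norm_exp, Real.exp_le_exp,
      show (-((n : ℂ) + 1) * β).re = -((n : ℝ) + 1) * β.re by simp]
    nlinarith
  rw [norm_mul, norm_mul, norm_pow, norm_neg, norm_natCast_add_one, mul_assoc]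
  gcongr
  · exact (norm_nonneg _).trans (hc 0)
  · exact hc n

lemma summable_expSeriesDeriv_term (hc : ∀ n, ‖c n‖ ≤ C) (m : ℕ) {β : ℂ} (hβ : 0 < β.re) :
    Summable fun n : ℕ => c n * (-((n : ℂ) + 1)) ^ m * cexp (-((n : ℂ) + 1) * β) :=
  .of_norm_bounded ((summable_pow_mul_exp_neg_succ_mul m hβ).mul_left C)
    fun n => norm_expSeriesDeriv_term_le hc m n le_rfl

lemma hasDerivAt_expSeriesDeriv (hc : ∀ n, ‖c n‖ ≤ C) (m : ℕ) {α : ℂ} (hα : 0 < α.re) :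
    HasDerivAt (expSeriesDeriv c m) (expSeriesDeriv c (m + 1) α) α := by
  have hmem : α ∈ {β : ℂ | α.re / 2 < β.re} := by show α.re / 2 < α.re; linarith
  refine hasDerivAt_tsum_of_isPreconnected
    ((summable_pow_mul_exp_neg_succ_mul (m + 1) (half_pos hα)).mul_left C)
    (isOpen_lt continuous_const continuous_re) (convex_halfSpace_re_gt _).isPreconnected
    (fun n β _ => ?_) (fun n β hβ => norm_expSeriesDeriv_term_le hc (m + 1) n (le_of_lt hβ))
    hmem (summable_expSeriesDeriv_term hc m hα) hmem
  refine ((((hasDerivAt_id' β).const_mul (-((n : ℂ) + 1))).cexp).const_mul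
    (c n * (-((n : ℂ) + 1)) ^ m)).congr_deriv ?_
  ring

lemma iteratedDeriv_expSeriesDeriv_zero (hc : ∀ n, ‖c n‖ ≤ C) (m : ℕ) {α : ℂ}
    (hα : 0 < α.re) : iteratedDeriv m (expSeriesDeriv c 0) α = expSeriesDeriv c m α := by
  induction m generalizing α with
  | zero => simp
  | succ m ih =>
    have h : iteratedDeriv m (expSeriesDeriv c 0) =ᶠ[nhds α] expSeriesDeriv c m :=
      Filter.eventually_of_mem ((isOpen_lt continuous_const continuous_re).mem_nhds hα)
        fun β hβ => ih hβ
    rw [iteratedDeriv_succ, h.deriv_eq, (hasDerivAt_expSeriesDeriv hc m hα).deriv]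

end ExpSeries

lemma one_div_one_add_cexp_eq_expSeriesDeriv {β : ℂ} (hβ : 0 < β.re) :
    1 / (1 + cexp β) = expSeriesDeriv (fun n => (-1) ^ n) 0 β := by
  have hq : ‖-cexp (-β)‖ < 1 := by
    rw [norm_neg, norm_exp, Real.exp_lt_one_iff, neg_re, neg_lt_zero]
    exact hβ
  have hterm : ∀ n : ℕ, (-1) ^ n * (-((n : ℂ) + 1)) ^ 0 * cexp (-((n : ℂ) + 1) * β)
      = cexp (-β) * (-cexp (-β)) ^ n := fun n => by
    rw [pow_zero, mul_one, neg_pow (cexp (-β)), ← Complex.exp_nat_mul, mul_left_comm,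
      ← Complex.exp_add]
    congr 2
    ring
  have hne : 1 - -cexp (-β) ≠ 0 := fun h => by
    rw [sub_eq_zero] at h
    simp [← h] at hq
  rw [expSeriesDeriv, tsum_congr hterm, tsum_mul_left, tsum_geometric_of_norm_lt_one hq,
    Complex.exp_neg]
  rw [Complex.exp_neg] at hne
  field_simp
  ring

lemma iteratedDeriv_one_div_one_add_cexp (m : ℕ) {α : ℂ} (hα : 0 < α.re) :
    iteratedDeriv m (fun β => 1 / (1 + cexp β)) α = expSeriesDeriv (fun n => (-1) ^ n) m α := by
  have h : (fun β => 1 / (1 + cexp β)) =ᶠ[nhds α] expSeriesDeriv (fun n => (-1) ^ n) 0 :=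
    Filter.eventually_of_mem ((isOpen_lt continuous_const continuous_re).mem_nhds hα)
      fun β hβ => one_div_one_add_cexp_eq_expSeriesDeriv hβ
  rw [h.iteratedDeriv_eq, iteratedDeriv_expSeriesDeriv_zero (C := 1) (by simp) m hα]

lemma hasSum_intervalIntegral_of_norm_le {ι E : Type*} [Countable ι] [NormedAddCommGroup E]
    [NormedSpace ℝ E] [CompleteSpace E] {F : ι → ℝ → E} {u : ι → ℝ} {a b : ℝ}
    (hF : ∀ i, Continuous (F i)) (hFu : ∀ i, ∀ t ∈ Ι a b, ‖F i t‖ ≤ u i) (hu : Summable u) :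
    HasSum (fun i => ∫ t in a..b, F i t) (∫ t in a..b, ∑' i, F i t) :=
  intervalIntegral.hasSum_integral_of_dominated_convergence (fun i _ => u i)
    (fun i => (hF i).aestronglyMeasurable) (fun i => .of_forall (hFu i))
    (.of_forall fun _ _ => hu) intervalIntegrable_const
    (.of_forall fun t ht => (hu.of_norm_bounded fun i => hFu i t ht).hasSum)

lemma norm_neg_one_pow_mul_cexp_le_one {z : ℂ} (hz : 0 ≤ z.re) {t : ℝ} (ht : 0 ≤ t) (n : ℕ) :
    ‖(-1) ^ n * cexp (-((n : ℂ) + 1) ^ 2 * z * t)‖ ≤ 1 := by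
  rw [norm_mul, norm_pow, norm_neg, norm_one, one_pow, one_mul, norm_exp, Real.exp_le_one_iff,
    show -((n : ℂ) + 1) ^ 2 * z * t = ((-(((n : ℝ) + 1) ^ 2 * t) : ℝ) : ℂ) * z by
      push_cast; ring, re_ofReal_mul]
  exact mul_nonpos_of_nonpos_of_nonneg (neg_nonpos.mpr (by positivity)) hz

lemma falseTheta_eq_expSeriesDeriv (z : ℂ) (t : ℝ) :
    (fun β => ∑' n : ℕ, (-1) ^ n * cexp (-((n : ℂ) + 1) ^ 2 * z * t - ((n : ℂ) + 1) * β))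
      = expSeriesDeriv (fun n => (-1) ^ n * cexp (-((n : ℂ) + 1) ^ 2 * z * t)) 0 := by
  ext β
  refine tsum_congr fun n => ?_
  rw [pow_zero, mul_one, mul_assoc ((-1 : ℂ) ^ n), ← Complex.exp_add]
  ring_nf

lemma hasSum_integral_iteratedDeriv_falseTheta {z α : ℂ} (hz : 0 ≤ z.re) (hα : 0 < α.re)
    (M m : ℕ) :
    HasSum (fun n : ℕ => ∫ t in (0 : ℝ)..1, ((1 - t : ℝ) : ℂ) ^ M *
        ((-1) ^ n * cexp (-((n : ℂ) + 1) ^ 2 * z * t) * (-((n : ℂ) + 1)) ^ m *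
          cexp (-((n : ℂ) + 1) * α)))
      (∫ t in (0 : ℝ)..1, ((1 - t : ℝ) : ℂ) ^ M * iteratedDeriv m
        (fun β => ∑' n : ℕ, (-1) ^ n * cexp (-((n : ℂ) + 1) ^ 2 * z * t - ((n : ℂ) + 1) * β))
        α) := by
  have hintegrand : ∀ t ∈ [[(0 : ℝ), 1]], ((1 - t : ℝ) : ℂ) ^ M * iteratedDeriv m
        (fun β => ∑' n : ℕ, (-1) ^ n * cexp (-((n : ℂ) + 1) ^ 2 * z * t - ((n : ℂ) + 1) * β)) α
      = ∑' n : ℕ, ((1 - t : ℝ) : ℂ) ^ M * ((-1) ^ n * cexp (-((n : ℂ) + 1) ^ 2 * z * t) *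
          (-((n : ℂ) + 1)) ^ m * cexp (-((n : ℂ) + 1) * α)) := fun t ht => by
    rw [uIcc_of_le zero_le_one] at ht
    rw [falseTheta_eq_expSeriesDeriv, iteratedDeriv_expSeriesDeriv_zero
      (norm_neg_one_pow_mul_cexp_le_one hz ht.1) m hα, expSeriesDeriv, ← tsum_mul_left]
  rw [intervalIntegral.integral_congr hintegrand]
  refine hasSum_intervalIntegral_of_norm_le (fun n => by fun_prop) (fun n t ht => ?_)
    (summable_pow_mul_exp_neg_succ_mul m hα)
  rw [uIoc_of_le zero_le_one] at ht
  have h1t : ‖((1 - t : ℝ) : ℂ) ^ M‖ ≤ 1 := by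
    rw [norm_pow, norm_real, Real.norm_of_nonneg (by linarith [ht.2])]
    exact pow_le_one₀ (by linarith [ht.2]) (by linarith [ht.1])
  simpa using mul_le_mul h1t (norm_expSeriesDeriv_term_le
    (norm_neg_one_pow_mul_cexp_le_one hz ht.1.le) m n le_rfl) (norm_nonneg _) zero_le_one

/-- Taylor expansion with integral remainder for the false theta series:
for `Re z > 0`, `Re α > 0`, `ℓ ≥ 0` and `N ≥ 1`,
`∑_{n≥1}(-1)^{n-1} n^ℓ e^{-n²z-nα}
  = (-1)^ℓ ∑_{k<N} ((-z)^k/k!) ∂_α^{2k+ℓ}[1/(1+e^α)] + z^N R_N(ℓ,α,z)`. -/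
theorem false_theta_taylor (ℓ : ℕ) (N : ℕ) (hN : 1 ≤ N) (α z : ℂ)
    (hz : 0 < z.re) (hα : 0 < α.re) :
    ∑' n : ℕ, (-1 : ℂ) ^ n * ((n : ℂ) + 1) ^ ℓ *
        Complex.exp (-((n : ℂ) + 1) ^ 2 * z - ((n : ℂ) + 1) * α)
      = (-1 : ℂ) ^ ℓ * ∑ k ∈ Finset.range N, (-z) ^ k / (k.factorial : ℂ) *
            iteratedDeriv (2 * k + ℓ) (fun β : ℂ => 1 / (1 + Complex.exp β)) α
        + z ^ N *
          ((-1 : ℂ) ^ (N + ℓ) / ((N - 1).factorial : ℂ) *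
            ∫ t in (0 : ℝ)..1, ((1 - t : ℝ) : ℂ) ^ (N - 1) *
              iteratedDeriv (2 * N + ℓ)
                (fun β : ℂ => ∑' n : ℕ, (-1 : ℂ) ^ n *
                  Complex.exp (-((n : ℂ) + 1) ^ 2 * z * (t : ℂ) - ((n : ℂ) + 1) * β))
                α) := by
  obtain ⟨M, rfl⟩ := Nat.exists_eq_add_of_le' hN
  have hcoeffs : HasSum
      (fun n : ℕ => (-1) ^ ℓ * ∑ k ∈ Finset.range (M + 1), (-z) ^ k / k.factorial *
        ((-1) ^ n * (-((n : ℂ) + 1)) ^ (2 * k + ℓ) * cexp (-((n : ℂ) + 1) * α)))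
      ((-1) ^ ℓ * ∑ k ∈ Finset.range (M + 1), (-z) ^ k / k.factorial *
        iteratedDeriv (2 * k + ℓ) (fun β : ℂ => 1 / (1 + cexp β)) α) := by
    simp_rw [iteratedDeriv_one_div_one_add_cexp _ hα]
    exact (hasSum_sum fun k _ => ((summable_expSeriesDeriv_term (C := 1) (by simp) _
      hα).hasSum.mul_left _)).mul_left _
  have hremainder := hasSum_integral_iteratedDeriv_falseTheta hz.le hα M (2 * (M + 1) + ℓ)
  rw [Nat.add_sub_cancel,
    ← (hcoeffs.add ((hremainder.mul_left _).mul_left _)).tsum_eq]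
  exact tsum_congr fun n => mul_pow_mul_cexp_eq_taylor _ _ z α ℓ M
end

section
/- Let a > 0 be a fixed real number and p a fixed nonnegative integer. Then there exists C > 0 and ε₀ > 0 such that, for all 0 < ε < ε₀ and all b ≥ 0, ∑_{n≥1} (a n² + b n)^p e^{-ε(a n² + b n)} ≤ C · (ε^{-p-1/2} + b^p) · e^{-εb}. -/
/-!
Write `Q = a x² + b x` with `x = n + 1`. For `x ≥ 2` put `R = Q - b = a x² + b (x - 1)`; then
`a x² ≤ R` and `Q ≤ 3 R`, so `Q^p e^{-εQ} ≤ 3^p e^{-εb} R^p e^{-εR}`, and `t^p e^{-t} ≤ p!` applied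
to `εR/2` turns this into `e^{-εb} · O(ε^{-p}) · e^{-εa x²/2}`. The Gaussian sum
`∑_{x ≥ 1} e^{-δ x²}` is `O(δ^{-1/2})`, by comparing it with the geometric series `∑ e^{1 - 2√δ x}`.
The term `x = 1`, where `b` cannot be absorbed into `R`, contributes the `b^p e^{-εb}`.
-/

open Real Nat

lemma pow_mul_exp_neg_le_factorial (p : ℕ) {t : ℝ} (ht : 0 ≤ t) : t ^ p * exp (-t) ≤ p ! := by
  rw [exp_neg, ← div_eq_mul_inv, div_le_iff₀ (exp_pos t), ← div_le_iff₀' (by positivity)]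
  exact Real.pow_div_factorial_le_exp t ht p

lemma pow_mul_exp_neg_mul_le (p : ℕ) {ε t : ℝ} (hε : 0 < ε) (ht : 0 ≤ t) :
    t ^ p * exp (-(ε * t)) ≤ p ! * (2 / ε) ^ p * exp (-(ε / 2 * t)) := by
  have hsplit : exp (-(ε * t)) = exp (-(ε / 2 * t)) * exp (-(ε / 2 * t)) := by
    rw [← exp_add]; ring_nf
  have hscale : t ^ p = (2 / ε) ^ p * (ε / 2 * t) ^ p := by
    rw [← mul_pow, ← mul_assoc, show 2 / ε * (ε / 2) = 1 by field_simp, one_mul]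
  calc t ^ p * exp (-(ε * t))
      = (2 / ε) ^ p * ((ε / 2 * t) ^ p * exp (-(ε / 2 * t))) * exp (-(ε / 2 * t)) := by
        rw [hsplit, hscale]; ring
    _ ≤ (2 / ε) ^ p * p ! * exp (-(ε / 2 * t)) := by
        gcongr; exact pow_mul_exp_neg_le_factorial p (by positivity)
    _ = p ! * (2 / ε) ^ p * exp (-(ε / 2 * t)) := by ring

lemma hasSum_exp_neg_mul_succ {s : ℝ} (hs : 0 < s) :
    HasSum (fun n : ℕ ↦ exp (-(s * (n + 1)))) (exp s - 1)⁻¹ := by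
  have hr : exp (-s) < 1 := exp_lt_one_iff.mpr (neg_neg_of_pos hs)
  have hterm (n : ℕ) : exp (-(s * (n + 1))) = exp (-s) * exp (-s) ^ n := by
    rw [← exp_nat_mul, ← exp_add]; ring_nf
  have hsum : exp (-s) * (1 - exp (-s))⁻¹ = (exp s - 1)⁻¹ := by
    rw [exp_neg]; field_simp
  simpa only [hterm, hsum] using (hasSum_geometric_of_lt_one (exp_pos _).le hr).mul_left (exp (-s))

lemma exp_neg_mul_sq_le {δ : ℝ} (hδ : 0 ≤ δ) (x : ℝ) :
    exp (-(δ * x ^ 2)) ≤ exp 1 * exp (-(2 * √δ * x)) := by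
  rw [← exp_add, exp_le_exp]
  nlinarith [sq_nonneg (√δ * x - 1), sq_sqrt hδ]

lemma summable_exp_neg_mul_succ_sq {δ : ℝ} (hδ : 0 < δ) :
    Summable fun n : ℕ ↦ exp (-(δ * (n + 1) ^ 2)) :=
  ((hasSum_exp_neg_mul_succ (by positivity : 0 < 2 * √δ)).summable.mul_left (exp 1)).of_nonneg_of_le
    (fun _ ↦ (exp_pos _).le) (fun n ↦ exp_neg_mul_sq_le hδ.le _)

lemma tsum_exp_neg_mul_succ_sq_le {δ : ℝ} (hδ : 0 < δ) :
    ∑' n : ℕ, exp (-(δ * (n + 1) ^ 2)) ≤ exp 1 / (2 * √δ) := by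
  have hs : 0 < 2 * √δ := by positivity
  have hgeom := (hasSum_exp_neg_mul_succ hs).mul_left (exp 1)
  calc ∑' n : ℕ, exp (-(δ * (n + 1) ^ 2)) ≤ exp 1 * (exp (2 * √δ) - 1)⁻¹ :=
        hasSum_le (fun n ↦ exp_neg_mul_sq_le hδ.le _)
          (summable_exp_neg_mul_succ_sq hδ).hasSum hgeom
    _ ≤ exp 1 / (2 * √δ) := by
        rw [div_eq_mul_inv]
        gcongr
        linarith [add_one_le_exp (2 * √δ)]

lemma quadratic_pow_mul_exp_le (p : ℕ) {a b ε x : ℝ} (ha : 0 ≤ a) (hb : 0 ≤ b) (hε : 0 < ε)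
    (hx : 2 ≤ x) :
    (a * x ^ 2 + b * x) ^ p * exp (-(ε * (a * x ^ 2 + b * x)))
      ≤ 3 ^ p * p ! * (2 / ε) ^ p * exp (-(ε * a / 2 * x ^ 2)) * exp (-(ε * b)) := by
  set R := a * x ^ 2 + b * (x - 1) with hR
  have hax : a * x ^ 2 ≤ R := by nlinarith
  have hR0 : 0 ≤ R := (mul_nonneg ha (sq_nonneg x)).trans hax
  have hQR : a * x ^ 2 + b * x ≤ 3 * R := by nlinarith
  have hQ : a * x ^ 2 + b * x = R + b := by ring
  calc (a * x ^ 2 + b * x) ^ p * exp (-(ε * (a * x ^ 2 + b * x)))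
      = (a * x ^ 2 + b * x) ^ p * exp (-(ε * R)) * exp (-(ε * b)) := by
        rw [hQ, mul_add, neg_add, exp_add, mul_assoc]
    _ ≤ (3 * R) ^ p * exp (-(ε * R)) * exp (-(ε * b)) := by
        gcongr
    _ = 3 ^ p * (R ^ p * exp (-(ε * R))) * exp (-(ε * b)) := by rw [mul_pow, mul_assoc (3 ^ p)]
    _ ≤ 3 ^ p * (p ! * (2 / ε) ^ p * exp (-(ε / 2 * R))) * exp (-(ε * b)) := by
        gcongr 3 ^ p * ?_ * _; exact pow_mul_exp_neg_mul_le p hε hR0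
    _ ≤ 3 ^ p * (p ! * (2 / ε) ^ p * exp (-(ε * a / 2 * x ^ 2))) * exp (-(ε * b)) := by
        gcongr 3 ^ p * (_ * exp ?_) * _
        have := mul_le_mul_of_nonneg_left hax (by positivity : 0 ≤ ε / 2)
        linarith
    _ = 3 ^ p * p ! * (2 / ε) ^ p * exp (-(ε * a / 2 * x ^ 2)) * exp (-(ε * b)) := by ring

lemma tsum_quadratic_pow_mul_exp_le (p : ℕ) {a b ε : ℝ} (ha : 0 < a) (hb : 0 ≤ b) (hε : 0 < ε) :
    ∑' n : ℕ, (a * ((n : ℝ) + 1) ^ 2 + b * ((n : ℝ) + 1)) ^ p *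
        exp (-(ε * (a * ((n : ℝ) + 1) ^ 2 + b * ((n : ℝ) + 1))))
      ≤ (2 ^ (p - 1) * (a ^ p + b ^ p) + 3 ^ p * p ! * (2 / ε) ^ p * (exp 1 / (2 * √(ε * a / 2))))
          * exp (-(ε * b)) := by
  set F : ℕ → ℝ := fun n ↦ (a * ((n : ℝ) + 1) ^ 2 + b * ((n : ℝ) + 1)) ^ p *
        exp (-(ε * (a * ((n : ℝ) + 1) ^ 2 + b * ((n : ℝ) + 1)))) with hF
  set G : ℕ → ℝ := fun n ↦ exp (-(ε * a / 2 * ((n : ℝ) + 1) ^ 2))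
  set K : ℝ := 3 ^ p * p ! * (2 / ε) ^ p
  set E : ℝ := exp (-(ε * b))
  have hδ : 0 < ε * a / 2 := by positivity
  have hGs : Summable G := summable_exp_neg_mul_succ_sq hδ
  have hKGs : Summable fun n ↦ K * G (n + 1) * E :=
    ((summable_nat_add_iff 1).mpr hGs).mul_left K |>.mul_right E
  have htail (n : ℕ) : F (n + 1) ≤ K * G (n + 1) * E :=
    quadratic_pow_mul_exp_le p ha.le hb hε (by push_cast; linarith [n.cast_nonneg (α := ℝ)])
  have htail_s : Summable fun n ↦ F (n + 1) :=
    hKGs.of_nonneg_of_le (fun n ↦ by positivity) htail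
  have hhead : F 0 ≤ 2 ^ (p - 1) * (a ^ p + b ^ p) * E := by
    simp only [hF, CharP.cast_eq_zero, zero_add, one_pow, mul_one]
    calc (a + b) ^ p * exp (-(ε * (a + b))) ≤ (a + b) ^ p * E :=
          mul_le_mul_of_nonneg_left (exp_le_exp.mpr (by nlinarith)) (by positivity)
      _ ≤ 2 ^ (p - 1) * (a ^ p + b ^ p) * E := by
          gcongr; exact add_pow_le ha.le hb p
  calc ∑' n, F n = F 0 + ∑' n, F (n + 1) :=
        ((summable_nat_add_iff 1).mp htail_s).tsum_eq_zero_add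
    _ ≤ 2 ^ (p - 1) * (a ^ p + b ^ p) * E + ∑' n, K * G (n + 1) * E :=
        add_le_add hhead (htail_s.tsum_le_tsum htail hKGs)
    _ = 2 ^ (p - 1) * (a ^ p + b ^ p) * E + K * (∑' n, G (n + 1)) * E := by
        rw [tsum_mul_right, tsum_mul_left]
    _ ≤ 2 ^ (p - 1) * (a ^ p + b ^ p) * E + K * (∑' n, G n) * E := by
        gcongr _ + K * ?_ * _
        exact tsum_comp_le_tsum_of_inj hGs (fun _ ↦ (exp_pos _).le) (add_left_injective 1)
    _ ≤ 2 ^ (p - 1) * (a ^ p + b ^ p) * E + K * (exp 1 / (2 * √(ε * a / 2))) * E := by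
        gcongr _ + K * ?_ * _; exact tsum_exp_neg_mul_succ_sq_le hδ
    _ = _ := by ring

lemma rpow_neg_natCast_sub_half {ε : ℝ} (hε : 0 < ε) (p : ℕ) :
    ε ^ (-(p : ℝ) - 1 / 2) = (ε ^ p * √ε)⁻¹ := by
  rw [show -(p : ℝ) - 1 / 2 = -((p : ℝ) + 1 / 2) by ring, rpow_neg hε.le, rpow_add hε,
    rpow_natCast, sqrt_eq_rpow]

/-- For fixed `a > 0` and `p ∈ ℕ`, uniformly in `b ≥ 0` and small `ε > 0`,
`∑_{n≥1} (an²+bn)^p e^{-ε(an²+bn)} ≤ C (ε^{-p-1/2} + b^p) e^{-εb}`. -/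
theorem sum_quadratic_pow_exp_bound (a : ℝ) (ha : 0 < a) (p : ℕ) :
    ∃ C > 0, ∃ ε₀ > 0, ∀ ε : ℝ, 0 < ε → ε < ε₀ → ∀ b : ℝ, 0 ≤ b →
      ∑' n : ℕ, (a * ((n : ℝ) + 1) ^ 2 + b * ((n : ℝ) + 1)) ^ p *
          Real.exp (-ε * (a * ((n : ℝ) + 1) ^ 2 + b * ((n : ℝ) + 1)))
        ≤ C * (ε ^ (-(p : ℝ) - 1 / 2) + b ^ p) * Real.exp (-ε * b) := by
  obtain ⟨M, hM0, hM⟩ : ∃ M : ℝ, 0 < M ∧ ∀ ε : ℝ, 0 < ε →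
      3 ^ p * p ! * (2 / ε) ^ p * (exp 1 / (2 * √(ε * a / 2))) = M * ε ^ (-(p : ℝ) - 1 / 2) := by
    refine ⟨3 ^ p * p ! * 2 ^ p * exp 1 / (2 * √(a / 2)), by positivity, fun ε hε ↦ ?_⟩
    rw [rpow_neg_natCast_sub_half hε, mul_div_assoc ε, sqrt_mul hε.le, div_pow]
    field_simp
  -- `ε₀ = 1` makes `ε ^ (-p - 1/2) ≥ 1`, which absorbs the `a ^ p` of the term `n = 0`.
  refine ⟨2 ^ (p - 1) * (a ^ p + 1) + M, by positivity, 1, one_pos, fun ε hε hε1 b hb ↦ ?_⟩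
  have hS1 : 1 ≤ ε ^ (-(p : ℝ) - 1 / 2) :=
    one_le_rpow_of_pos_of_le_one_of_nonpos hε hε1.le (by linarith)
  simp only [neg_mul]
  refine (tsum_quadratic_pow_mul_exp_le p ha hb hε).trans ?_
  rw [hM ε hε]
  gcongr ?_ * _
  have hT : (0 : ℝ) ≤ 2 ^ (p - 1) := by positivity
  have hap := pow_nonneg ha.le p
  have hbp := pow_nonneg hb p
  nlinarith [mul_nonneg (mul_nonneg hT hap) (sub_nonneg.mpr hS1),
    mul_nonneg (mul_nonneg hT hap) hbp, mul_nonneg hM0.le hbp]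
end

section
/- For every positive integer ℓ, p(ℓ+1) - 2·p(ℓ) + p(ℓ-1) ≥ 0, where p(n) denotes the number of partitions of n. -/
/-- The number of partitions of `n`. -/
noncomputable def partitionCount (n : ℕ) : ℕ := Fintype.card (Nat.Partition n)

/-- Number of partitions of `n` with no part equal to 1. -/
noncomputable def noOneCount (n : ℕ) : ℕ :=
  Fintype.card {ν : Nat.Partition n // 1 ∉ ν.parts}

lemma multiset_sup_mem (s : Multiset ℕ) (hs : s ≠ 0) : s.sup ∈ s := by
  induction s using Multiset.induction with
  | empty => simp at hs
  | cons a s ih =>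
    rw [Multiset.sup_cons]
    rcases eq_or_ne s 0 with rfl | h
    · simp
    · rcases le_total s.sup a with hle | hle
      · rw [sup_eq_left.mpr hle]; exact Multiset.mem_cons_self a s
      · rw [sup_eq_right.mpr hle]; exact Multiset.mem_cons_of_mem (ih h)

/-- Partitions of `n+1` containing a 1 correspond to partitions of `n`. -/
noncomputable def withOneEquiv (n : ℕ) :
    {ν : Nat.Partition (n + 1) // 1 ∈ ν.parts} ≃ Nat.Partition n where
  toFun ν := ⟨ν.1.parts.erase 1,
    fun {i} hi => ν.1.parts_pos (Multiset.mem_of_mem_erase hi), by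
      have h := Multiset.sum_erase ν.2
      have := ν.1.parts_sum
      omega⟩
  invFun μ := ⟨⟨1 ::ₘ μ.parts,
    fun {i} hi => by
      rcases Multiset.mem_cons.mp hi with rfl | h
      · exact one_pos
      · exact μ.parts_pos h, by
      rw [Multiset.sum_cons, μ.parts_sum]; omega⟩,
    Multiset.mem_cons_self 1 μ.parts⟩
  left_inv ν := by
    apply Subtype.ext
    apply Nat.Partition.ext
    exact Multiset.cons_erase ν.2
  right_inv μ := by
    apply Nat.Partition.ext
    exact Multiset.erase_cons_head 1 μ.parts

lemma count_split (n : ℕ) :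
    partitionCount (n + 1) = partitionCount n + noOneCount (n + 1) := by
  classical
  have h := Fintype.card_subtype_compl
    (p := fun ν : Nat.Partition (n + 1) => 1 ∈ ν.parts)
  have h2 : Fintype.card {ν : Nat.Partition (n + 1) // 1 ∈ ν.parts}
      = partitionCount n := Fintype.card_congr (withOneEquiv n)
  have h3 : Fintype.card {ν : Nat.Partition (n + 1) // 1 ∈ ν.parts}
      ≤ Fintype.card (Nat.Partition (n + 1)) := Fintype.card_subtype_le _
  unfold partitionCount noOneCount at *
  simp only [h, ← h2]
  omega

lemma parts_ne_zero {n : ℕ} (hn : 1 ≤ n) (ν : Nat.Partition n) : ν.parts ≠ 0 := by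
  intro h0
  have := ν.parts_sum
  rw [h0] at this
  simp at this
  omega

/-- Bump the largest part of a partition of `n` (with no part 1) by one. -/
def bumpSup {n : ℕ} (hn : 1 ≤ n) (ν : {ν : Nat.Partition n // 1 ∉ ν.parts}) :
    {ν : Nat.Partition (n + 1) // 1 ∉ ν.parts} :=
  ⟨⟨(ν.1.parts.sup + 1) ::ₘ ν.1.parts.erase ν.1.parts.sup,
    fun {i} hi => by
      rcases Multiset.mem_cons.mp hi with rfl | h
      · omega
      · exact ν.1.parts_pos (Multiset.mem_of_mem_erase h), by
    have hmem := multiset_sup_mem ν.1.parts (parts_ne_zero hn ν.1)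
    have h := Multiset.sum_erase hmem
    have h2 := ν.1.parts_sum
    rw [Multiset.sum_cons]
    omega⟩, by
    intro hc
    rcases Multiset.mem_cons.mp hc with h | h
    · have hmem := multiset_sup_mem ν.1.parts (parts_ne_zero hn ν.1)
      have := ν.1.parts_pos hmem
      omega
    · exact ν.2 (Multiset.mem_of_mem_erase h)⟩

lemma bumpSup_parts {n : ℕ} (hn : 1 ≤ n) (ν : {ν : Nat.Partition n // 1 ∉ ν.parts}) :
    (bumpSup hn ν).1.parts = (ν.1.parts.sup + 1) ::ₘ ν.1.parts.erase ν.1.parts.sup :=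
  rfl

lemma noOne_mono (n : ℕ) (hn : 1 ≤ n) : noOneCount n ≤ noOneCount (n + 1) := by
  classical
  apply Fintype.card_le_of_injective (bumpSup hn)
  intro ν μ hνμ
  have hparts : (ν.1.parts.sup + 1) ::ₘ ν.1.parts.erase ν.1.parts.sup
      = (μ.1.parts.sup + 1) ::ₘ μ.1.parts.erase μ.1.parts.sup := by
    rw [← bumpSup_parts hn ν, ← bumpSup_parts hn μ, hνμ]
  -- the sup of each side is sup+1
  have key : ∀ ρ : Nat.Partition n,
      ((ρ.parts.sup + 1) ::ₘ ρ.parts.erase ρ.parts.sup).sup = ρ.parts.sup + 1 := by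
    intro ρ
    rw [Multiset.sup_cons]
    have herase : (ρ.parts.erase ρ.parts.sup).sup ≤ ρ.parts.sup :=
      Multiset.sup_le.mpr fun b hb =>
        Multiset.le_sup (Multiset.mem_of_mem_erase hb)
    omega
  have hsup : ν.1.parts.sup = μ.1.parts.sup := by
    have := congrArg Multiset.sup hparts
    rw [key ν.1, key μ.1] at this
    omega
  have hne : ν.1.parts ≠ 0 := parts_ne_zero hn ν.1
  have hne' : μ.1.parts ≠ 0 := parts_ne_zero hn μ.1
  rw [hsup] at hparts
  have herase : ν.1.parts.erase μ.1.parts.sup = μ.1.parts.erase μ.1.parts.sup :=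
    (Multiset.cons_inj_right _).mp hparts
  have hfin : ν.1.parts = μ.1.parts := by
    calc ν.1.parts = ν.1.parts.sup ::ₘ ν.1.parts.erase ν.1.parts.sup :=
          (Multiset.cons_erase (multiset_sup_mem ν.1.parts hne)).symm
      _ = μ.1.parts.sup ::ₘ ν.1.parts.erase μ.1.parts.sup := by rw [hsup]
      _ = μ.1.parts.sup ::ₘ μ.1.parts.erase μ.1.parts.sup := by rw [herase]
      _ = μ.1.parts := Multiset.cons_erase (multiset_sup_mem μ.1.parts hne')
  exact Subtype.ext (Nat.Partition.ext hfin)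

/-- The partition function is convex: `p(ℓ+1) - 2p(ℓ) + p(ℓ-1) ≥ 0` for `ℓ ≥ 1`. -/
theorem partition_convex (ℓ : ℕ) (hℓ : 1 ≤ ℓ) :
    2 * partitionCount ℓ ≤ partitionCount (ℓ + 1) + partitionCount (ℓ - 1) := by
  obtain ⟨m, rfl⟩ : ∃ m, ℓ = m + 1 := ⟨ℓ - 1, by omega⟩
  have h1 := count_split (m + 1)
  have h2 := count_split m
  have h3 := noOne_mono (m + 1) (by omega)
  simp only [Nat.add_sub_cancel]
  omega
end

section
/- Fix k ∈ ℕ and define I_k(m,n) for m, n ≥ 0 by the generating function ∑_{n≥0} I_k(m,n) q^n = (∏_{j≥1}(1-q^j))^{-1} · ∑_{n≥1} (-1)^{n-1} q^{n((2k-1)n-1)/2 + mn}, and N_k(m,n) = I_k(|m|,n) - I_k(|m|+1,n). Then for all integers m with |m| > n/2, N_k(m,n) = p(n - (k-1+|m|)) - p(n - (k+|m|)), where p is the partition function (with p(x) = 0 for x < 0). -/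
open scoped BigOperators

/-- Partition function `p`, extended by `0` to negative integers. -/
noncomputable def partFun (n : ℤ) : ℤ :=
  if 0 ≤ n then (Fintype.card (Nat.Partition n.toNat) : ℤ) else 0

/-- `I_k(m,n)`: the coefficient of `qⁿ` in
`(∏_{j≥1}(1-q^j))^{-1} ∑_{ℓ≥1}(-1)^{ℓ-1} q^{ℓ((2k-1)ℓ-1)/2+mℓ}`,
written out via `∑ p(n)qⁿ = ∏(1-q^j)^{-1}`. -/
noncomputable def Ik (k m n : ℕ) : ℤ :=
  ∑ ℓ ∈ Finset.Icc 1 (n + 1), (-1 : ℤ) ^ (ℓ - 1) *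
    partFun ((n : ℤ) - ((2 * (k : ℤ) - 1) * (ℓ : ℤ) ^ 2 - (ℓ : ℤ)) / 2 - (m : ℤ) * (ℓ : ℤ))

/-- `N_k(m,n) = I_k(|m|,n) - I_k(|m|+1,n)`. -/
noncomputable def Nk (k : ℕ) (m : ℤ) (n : ℕ) : ℤ :=
  Ik k m.natAbs n - Ik k (m.natAbs + 1) n

/-!
For `ℓ ≥ 2` the exponent `ℓ((2k-1)ℓ-1)/2 + Mℓ` in the sum defining `I_k(M,n)` is at least
`2M`, which exceeds `n` when `M > n/2`; so only the `ℓ = 1` term survives and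
`I_k(M,n) = p(n - (k-1) - M)`. Taking the difference at `M = |m|` and `M = |m| + 1` gives the
claim.
-/

lemma partFun_of_neg {x : ℤ} (h : x < 0) : partFun x = 0 := by
  simp [partFun, not_le.mpr h]

lemma sub_exponent_neg {k : ℕ} (hk : 1 ≤ k) {n M : ℤ} (hn : 0 ≤ n) (h : n < 2 * M) {ℓ : ℤ}
    (hℓ : 2 ≤ ℓ) :
    n - ((2 * (k : ℤ) - 1) * ℓ ^ 2 - ℓ) / 2 - M * ℓ < 0 := by
  have hquad : 0 ≤ ((2 * (k : ℤ) - 1) * ℓ ^ 2 - ℓ) / 2 := by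
    apply Int.ediv_nonneg _ zero_le_two
    have hk' : (1 : ℤ) ≤ k := by exact_mod_cast hk
    nlinarith
  have hlin : 2 * M ≤ M * ℓ := by nlinarith
  omega

lemma Ik_eq_partFun_of_lt_two_mul {k : ℕ} (hk : 1 ≤ k) {n M : ℕ} (h : (n : ℤ) < 2 * M) :
    Ik k M n = partFun ((n : ℤ) - ((k : ℤ) - 1) - M) := by
  unfold Ik
  rw [Finset.sum_eq_single_of_mem 1 (by simp)]
  · rw [pow_zero, one_mul]
    congr 1
    push_cast
    omega
  · intro ℓ hℓ hne
    have hℓ2 : (2 : ℤ) ≤ ℓ := by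
      have := (Finset.mem_Icc.mp hℓ).1
      omega
    rw [partFun_of_neg (sub_exponent_neg hk (Int.natCast_nonneg n) h hℓ2), mul_zero]

/-- For `|m| > n/2`, `N_k(m,n) = p(n-(k-1+|m|)) - p(n-(k+|m|))`. -/
theorem Nk_of_large_abs (k : ℕ) (hk : 1 ≤ k) (n : ℕ) (m : ℤ)
    (hm : (n : ℤ) < 2 * |m|) :
    Nk k m n = partFun ((n : ℤ) - ((k : ℤ) - 1 + |m|))
      - partFun ((n : ℤ) - ((k : ℤ) + |m|)) := by
  have hM : (n : ℤ) < 2 * (m.natAbs : ℕ) := by rwa [Nat.cast_natAbs, Int.cast_abs]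
  have hM' : (n : ℤ) < 2 * (m.natAbs + 1 : ℕ) := by push_cast at hM ⊢; omega
  rw [Nk, Ik_eq_partFun_of_lt_two_mul hk hM, Ik_eq_partFun_of_lt_two_mul hk hM']
  push_cast
  ring_nf
end

section
/- Let r, J be nonnegative integers and let α = x + iy with x, y real, x ≥ 0 and |y| ≤ x. Then there is a constant C = C(r,J) (independent of α) such that |e^α · d^J/dα^J [e^{rα}/(1+e^α)^{r+1}]| ≤ C. -/
/-!
With `σ(z) = (1 + e^{-z})⁻¹` the complex sigmoid, `f(z) = e^{rz} / (1 + e^z)^{r+1}` equals `(1 - σ) σ^r`, and since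
`σ' = σ (1 - σ)`, each derivative keeps the shape `(1 - σ) P(σ)` for a polynomial `P`.
Multiplying by `e^z` turns `1 - σ` into `σ`, so `e^z ∂^J f = σ P(σ)`. On the sector
`|y| ≤ x` one has `|1 + e^{-z}| ≥ 1/2`, i.e. `|σ| ≤ 2`, and a polynomial is bounded on a disc.
-/

open Polynomial

namespace Complex

noncomputable def sigmoid (z : ℂ) : ℂ := (1 + exp (-z))⁻¹

theorem sigmoid_eq_exp_div (z : ℂ) : sigmoid z = exp z / (1 + exp z) := calc
  sigmoid z = (exp (-z) * (exp z + 1))⁻¹ := by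
    rw [sigmoid, mul_add, ← exp_add, neg_add_cancel, exp_zero, mul_one, add_comm]
  _ = exp z / (1 + exp z) := by rw [mul_inv, exp_neg, inv_inv, div_eq_mul_inv, add_comm]

theorem hasDerivAt_sigmoid {z : ℂ} (hz : 1 + exp z ≠ 0) :
    HasDerivAt sigmoid (sigmoid z * (1 - sigmoid z)) z := by
  have h := (hasDerivAt_exp z).div ((hasDerivAt_exp z).const_add 1) hz
  rw [show sigmoid = fun w => exp w / (1 + exp w) from funext sigmoid_eq_exp_div]
  refine h.congr_deriv ?_
  field_simp

theorem exp_mul_one_sub_sigmoid {z : ℂ} (hz : 1 + exp z ≠ 0) :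
    exp z * (1 - sigmoid z) = sigmoid z := by
  rw [sigmoid_eq_exp_div]
  field_simp
  ring

theorem exp_nat_mul_div_one_add_exp_pow {z : ℂ} (hz : 1 + exp z ≠ 0) (r : ℕ) :
    exp (r * z) / (1 + exp z) ^ (r + 1) = (1 - sigmoid z) * sigmoid z ^ r := by
  rw [sigmoid_eq_exp_div, exp_nat_mul, div_pow]
  field_simp
  ring

noncomputable def sigmoidDerivStep (P : ℂ[X]) : ℂ[X] := -X * P + X * (1 - X) * derivative P

theorem hasDerivAt_one_sub_sigmoid_mul_eval (P : ℂ[X]) {z : ℂ} (hz : 1 + exp z ≠ 0) :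
    HasDerivAt (fun w => (1 - sigmoid w) * P.eval (sigmoid w))
      ((1 - sigmoid z) * (sigmoidDerivStep P).eval (sigmoid z)) z := by
  have hσ := hasDerivAt_sigmoid hz
  refine ((hσ.const_sub 1).mul ((P.hasDerivAt _).comp z hσ)).congr_deriv ?_
  simp only [sigmoidDerivStep, Function.comp_apply, eval_add, eval_mul, eval_neg, eval_X,
    eval_sub, eval_one]
  ring

theorem exists_iteratedDeriv_eq_one_sub_sigmoid_mul_eval {f : ℂ → ℂ} {Q : ℂ[X]}
    (hf : ∀ z, 1 + exp z ≠ 0 → f z = (1 - sigmoid z) * Q.eval (sigmoid z)) (J : ℕ) :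
    ∃ P : ℂ[X], ∀ z, 1 + exp z ≠ 0 →
      iteratedDeriv J f z = (1 - sigmoid z) * P.eval (sigmoid z) := by
  induction J with
  | zero => exact ⟨Q, by simpa using hf⟩
  | succ J ih =>
    obtain ⟨P, hP⟩ := ih
    refine ⟨sigmoidDerivStep P, fun z hz => ?_⟩
    have hU : IsOpen {w : ℂ | 1 + exp w ≠ 0} := isOpen_ne_fun (by fun_prop) continuous_const
    have hev : iteratedDeriv J f =ᶠ[nhds z] fun w => (1 - sigmoid w) * P.eval (sigmoid w) :=
      Filter.eventually_of_mem (hU.mem_nhds hz) hP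
    rw [iteratedDeriv_succ, hev.deriv_eq, (hasDerivAt_one_sub_sigmoid_mul_eval P hz).deriv]

theorem half_le_norm_one_add_exp_neg {z : ℂ} (hz : |z.im| ≤ z.re) :
    1 / 2 ≤ ‖1 + exp (-z)‖ := by
  rcases le_or_gt 0 (Real.cos z.im) with hcos | hcos
  · have hre : (1 + exp (-z)).re = 1 + Real.exp (-z.re) * Real.cos z.im := by
      simp [exp_re]
    have := re_le_norm (1 + exp (-z))
    nlinarith [Real.exp_pos (-z.re)]
  · have hre : 1 < z.re := by
      have : Real.pi / 2 < |z.im| := by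
        by_contra! h
        exact hcos.not_ge (Real.cos_nonneg_of_mem_Icc ⟨neg_le_of_abs_le h, le_of_abs_le h⟩)
      linarith [Real.pi_gt_three]
    have hexp : ‖exp (-z)‖ ≤ 1 / 2 := by
      rw [norm_exp, neg_re, Real.exp_neg, one_div]
      gcongr
      linarith [Real.add_one_le_exp z.re]
    have := norm_sub_norm_le (1 : ℂ) (-exp (-z))
    rw [sub_neg_eq_add, norm_one, norm_neg] at this
    linarith

theorem norm_sigmoid_le_two {z : ℂ} (hz : |z.im| ≤ z.re) : ‖sigmoid z‖ ≤ 2 := by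
  rw [sigmoid, norm_inv]
  exact inv_le_of_inv_le₀ (by norm_num) (by simpa using half_le_norm_one_add_exp_neg hz)

theorem one_add_exp_ne_zero {z : ℂ} (hz : |z.im| ≤ z.re) : 1 + exp z ≠ 0 := by
  have h : 1 + exp z = exp z * (1 + exp (-z)) := by
    rw [mul_add, ← exp_add, add_neg_cancel, exp_zero, mul_one, add_comm]
  have := half_le_norm_one_add_exp_neg hz
  rw [h]
  exact mul_ne_zero (exp_ne_zero z) (norm_pos_iff.mp (by linarith))

end Complex

/-- For `α = x + iy` with `x ≥ 0`, `|y| ≤ x`: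
`|e^α ∂_α^J [e^{rα}/(1+e^α)^{r+1}]| ≤ C(r,J)` uniformly in `α`. -/
theorem bounded_exp_mul_iteratedDeriv (r J : ℕ) :
    ∃ C : ℝ, ∀ x y : ℝ, 0 ≤ x → |y| ≤ x →
      ‖Complex.exp (x + y * Complex.I) *
        iteratedDeriv J
          (fun β : ℂ => Complex.exp (r * β) / (1 + Complex.exp β) ^ (r + 1))
          (x + y * Complex.I)‖ ≤ C := by
  obtain ⟨P, hP⟩ := Complex.exists_iteratedDeriv_eq_one_sub_sigmoid_mul_eval (Q := X ^ r)
    (fun z hz => by simpa using Complex.exp_nat_mul_div_one_add_exp_pow hz r) J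
  obtain ⟨M, hM⟩ := (isCompact_closedBall (0 : ℂ) 2).exists_bound_of_continuousOn
    P.continuous.continuousOn
  refine ⟨2 * M, fun x y _ hy => ?_⟩
  set z : ℂ := x + y * Complex.I
  have hz : |z.im| ≤ z.re := by simpa [z] using hy
  have hne := Complex.one_add_exp_ne_zero hz
  have hσ := Complex.norm_sigmoid_le_two hz
  rw [hP z hne, ← mul_assoc, Complex.exp_mul_one_sub_sigmoid hne, norm_mul]
  exact mul_le_mul hσ (hM _ (by simpa using hσ)) (norm_nonneg _) zero_le_two
end

section
/- For every nonnegative integer N and every real α ≥ 0, |e^{-α} − (-1)^N ∂_α^N [1/(1+e^α)]| ≤ C_N e^{-2α} for some constant C_N depending only on N. Equivalently, e^{-α} = (-1)^N ∂_α^N[1/(1+e^α)] + O(e^{-2α}) uniformly in α ≥ 0. -/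
/-! The function `f β = 1 / (1 + e^β)` satisfies `f' = f² - f`, so every derivative of `f` is a
polynomial in `f`; by induction its linear part is `(-1)^N f`. Since `0 < f(α) < 1` and
`e^{-α} - f(α) = e^{-α} f(α) ≤ e^{-2α}`, the remaining terms, all divisible by `f²`, are
`O(e^{-2α})`. -/

open Polynomial Real Set

theorem iteratedDeriv_eq_eval_iterate {𝕜 : Type*} [NontriviallyNormedField 𝕜]
    {f : 𝕜 → 𝕜} {G : 𝕜[X]}
    (hf : ∀ x, HasDerivAt f (G.eval (f x)) x) (n : ℕ) :
    iteratedDeriv n f = fun x => ((fun p : 𝕜[X] => derivative p * G)^[n] X).eval (f x) := by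
  induction n with
  | zero => simp
  | succ n ih =>
    funext x
    rw [iteratedDeriv_succ, ih, Function.iterate_succ_apply', eval_mul]
    exact ((Polynomial.hasDerivAt _ _).comp x (hf x)).deriv

theorem X_sq_dvd_iterate_derivative_mul_sub_C_mul_X (n : ℕ) :
    (X ^ 2 : ℝ[X]) ∣
      (fun p : ℝ[X] => derivative p * (X ^ 2 - X))^[n] X - C ((-1) ^ n) * X := by
  induction n with
  | zero => exact ⟨0, by simp⟩
  | succ n ih =>
    obtain ⟨Q, hQ⟩ := ih
    rw [sub_eq_iff_eq_add] at hQ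
    refine ⟨C ((-1) ^ n) + (X - 1) * (C 2 * Q + X * derivative Q), ?_⟩
    rw [Function.iterate_succ_apply', hQ, pow_succ (-1 : ℝ), mul_neg_one, map_neg]
    simp only [derivative_add, derivative_mul, derivative_C, derivative_X, derivative_X_sq]
    ring

theorem exists_abs_eval_le_mul_sq_of_X_sq_dvd {p : ℝ[X]} (hp : X ^ 2 ∣ p) :
    ∃ C, 0 ≤ C ∧ ∀ y ∈ Icc (0 : ℝ) 1, |p.eval y| ≤ C * y ^ 2 := by
  obtain ⟨Q, rfl⟩ := hp
  obtain ⟨C, hC⟩ :=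
    isCompact_Icc.exists_bound_of_continuousOn (Q.continuous.continuousOn (s := Icc (0 : ℝ) 1))
  refine ⟨max C 0, le_max_right _ _, fun y hy => ?_⟩
  rw [eval_mul, eval_pow, eval_X, abs_mul, abs_of_nonneg (sq_nonneg y), mul_comm]
  exact mul_le_mul_of_nonneg_right ((hC y hy).trans (le_max_left _ _)) (sq_nonneg y)

theorem hasDerivAt_one_div_one_add_exp (β : ℝ) :
    HasDerivAt (fun β => 1 / (1 + exp β))
      ((1 / (1 + exp β)) ^ 2 - 1 / (1 + exp β)) β := by
  refine ((hasDerivAt_const β 1).fun_div ((hasDerivAt_exp β).const_add 1)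
    (by positivity)).congr_deriv ?_
  field_simp
  ring

theorem one_div_one_add_exp_mem_Icc (α : ℝ) : 1 / (1 + exp α) ∈ Icc 0 1 := by
  constructor
  · positivity
  · rw [div_le_one (by positivity)]
    linarith [exp_pos α]

theorem exp_neg_sub_one_div_one_add_exp (α : ℝ) :
    exp (-α) - 1 / (1 + exp α) = exp (-α) * (1 / (1 + exp α)) := by
  rw [exp_neg]
  field_simp
  ring

theorem one_div_one_add_exp_le_exp_neg (α : ℝ) : 1 / (1 + exp α) ≤ exp (-α) := by
  rw [exp_neg, one_div]
  exact inv_anti₀ (exp_pos α) (by linarith)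

theorem abs_exp_neg_sub_one_div_one_add_exp_le (α : ℝ) :
    |exp (-α) - 1 / (1 + exp α)| ≤ exp (-2 * α) := by
  have hy := one_div_one_add_exp_mem_Icc α
  rw [exp_neg_sub_one_div_one_add_exp, abs_of_nonneg (mul_nonneg (exp_pos _).le hy.1),
    show -2 * α = -α + -α by ring, exp_add]
  exact mul_le_mul_of_nonneg_left (one_div_one_add_exp_le_exp_neg α) (exp_pos _).le

/-- For each `N` there is `C_N` with
`|e^{-α} - (-1)^N ∂_α^N [1/(1+e^α)]| ≤ C_N e^{-2α}` for all `α ≥ 0`. -/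
theorem exp_neg_approx_iteratedDeriv (N : ℕ) :
    ∃ C : ℝ, ∀ α : ℝ, 0 ≤ α →
      |Real.exp (-α) -
          (-1 : ℝ) ^ N * iteratedDeriv N (fun β : ℝ => 1 / (1 + Real.exp β)) α|
        ≤ C * Real.exp (-2 * α) := by
  set P := (fun p : ℝ[X] => derivative p * (X ^ 2 - X))^[N] X
  set R := P - Polynomial.C ((-1) ^ N) * X with hR
  obtain ⟨B, hB0, hB⟩ :=
    exists_abs_eval_le_mul_sq_of_X_sq_dvd (X_sq_dvd_iterate_derivative_mul_sub_C_mul_X N)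
  refine ⟨1 + B, fun α _ => ?_⟩
  set y := 1 / (1 + exp α)
  have hy_sq : y ^ 2 ≤ exp (-2 * α) := by
    rw [show -2 * α = -α * 2 by ring, exp_mul, rpow_two]
    exact pow_le_pow_left₀ (one_div_one_add_exp_mem_Icc α).1
      (one_div_one_add_exp_le_exp_neg α) 2
  have h_sign : ((-1 : ℝ) ^ N) ^ 2 = 1 := by rw [← pow_mul, mul_comm, pow_mul]; norm_num
  rw [iteratedDeriv_eq_eval_iterate (G := X ^ 2 - X) fun β => by
    simpa only [eval_sub, eval_pow, eval_X] using hasDerivAt_one_div_one_add_exp β]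
  calc |exp (-α) - (-1) ^ N * P.eval y|
      = |(exp (-α) - y) - (-1) ^ N * R.eval y| := by
        rw [hR, eval_sub, eval_mul, eval_C, eval_X]
        congr 1
        linear_combination (-y) * h_sign
    _ ≤ |exp (-α) - y| + |R.eval y| :=
        (abs_sub _ _).trans_eq (by rw [abs_mul, abs_neg_one_pow, one_mul])
    _ ≤ exp (-2 * α) + B * exp (-2 * α) :=
        add_le_add (abs_exp_neg_sub_one_div_one_add_exp_le α)
          ((hB y (one_div_one_add_exp_mem_Icc α)).trans (mul_le_mul_of_nonneg_left hy_sq hB0))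
    _ = (1 + B) * exp (-2 * α) := by ring
end
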